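/- The 25 six-cell combinations listed in Appendix B (translated to coordinates on the 7 × 7 board, where the number m ∈ {1,...,49} corresponds to the cell ((m-1) mod 7, (m-1) div 7)) are the vertex sets of closed knight paths of length 6, and no two of them are equivalent under board symmetries; in particular, the vertex sets {0,1,9,10,14,15}, {0,2,4,9,15,17}, and {1,14,16,29,31,44} (numbers m-1 for the listed combinations 1, 2, and 25) each carry a closed knight path of length 6 and are pairwise inequivalent. -/

import Mathlib

/-- Two cells of `ℤ × ℤ` are a knight's move apart. -/
def KnightMove (u v : ℤ × ℤ) : Prop :=
  (|u.1 - v.1| = 1 ∧ |u.2 - v.2| = 2) ∨ (|u.1 - v.1| = 2 ∧ |u.2 - v.2| = 1)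

/-- A closed knight path of length `n`. -/
def IsClosedKnightPath (n : ℕ) (p : ZMod n → ℤ × ℤ) : Prop :=
  Function.Injective p ∧ ∀ i : ZMod n, KnightMove (p i) (p (i + 1))

/-- The 90° rotation `(x, y) ↦ (-y, x)` as a `ℤ`-linear automorphism of `ℤ × ℤ`. -/
def rot90 : (ℤ × ℤ) ≃ₗ[ℤ] ℤ × ℤ where
  toFun x := (-x.2, x.1)
  invFun x := (x.2, -x.1)
  map_add' a b := by simp [Prod.ext_iff]; ring
  map_smul' m x := by simp [Prod.ext_iff]
  left_inv x := by simp
  right_inv x := by simp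

/-- The reflection `(x, y) ↦ (y, x)` as a `ℤ`-linear automorphism of `ℤ × ℤ`. -/
def reflDiag : (ℤ × ℤ) ≃ₗ[ℤ] ℤ × ℤ where
  toFun x := (x.2, x.1)
  invFun x := (x.2, x.1)
  map_add' a b := by simp [Prod.ext_iff]
  map_smul' m x := by simp [Prod.ext_iff]
  left_inv x := by simp
  right_inv x := by simp

/-- A board symmetry is a map `x ↦ A x + t` with `A` in the group generated by the
90° rotation and the reflection, and `t ∈ ℤ × ℤ`. -/
def IsBoardSymmetry (g : ℤ × ℤ → ℤ × ℤ) : Prop :=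
  ∃ A ∈ Subgroup.closure ({rot90, reflDiag} : Set ((ℤ × ℤ) ≃ₗ[ℤ] ℤ × ℤ)),
    ∃ t : ℤ × ℤ, g = fun x => A x + t

/-- A dihedral reindexing of `ZMod n`: a map `i ↦ ε i + c` with `ε = ±1`. -/
def IsDihedralReindex (n : ℕ) (σ : ZMod n → ZMod n) : Prop :=
  ∃ ε c : ZMod n, (ε = 1 ∨ ε = -1) ∧ σ = fun i => ε * i + c

/-- Two paths are equivalent if one is obtained from the other by a board symmetry
together with a dihedral reindexing. -/
def PathEquiv (n : ℕ) (p p' : ZMod n → ℤ × ℤ) : Prop :=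
  ∃ g σ, IsBoardSymmetry g ∧ IsDihedralReindex n σ ∧ p' = g ∘ p ∘ σ

/-- The cell of the 7 × 7 board carrying the 0-based label `ℓ` (the number `m = ℓ + 1`
of the game slip), namely `(ℓ mod 7, ℓ div 7)`. -/
def cellOfLabel (ℓ : ℕ) : ℤ × ℤ := (((ℓ % 7 : ℕ) : ℤ), ((ℓ / 7 : ℕ) : ℤ))

/-- The set of cells of a combination given by a set of 0-based labels. -/
def cellsOf (S : Finset ℕ) : Set (ℤ × ℤ) := cellOfLabel '' (S : Set ℕ)

/-- The 25 six-cell combinations of Appendix B, as sets of 0-based labels `m - 1`. -/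
def appendixB : Fin 25 → Finset ℕ :=
  ![{0, 1, 9, 10, 14, 15}, {0, 2, 4, 9, 15, 17}, {0, 2, 9, 11, 15, 24},
    {0, 2, 9, 15, 17, 22}, {0, 4, 9, 10, 15, 19}, {0, 4, 9, 15, 17, 30},
    {0, 4, 9, 15, 19, 24}, {0, 5, 9, 10, 15, 18}, {0, 9, 10, 15, 18, 23},
    {0, 9, 10, 15, 19, 24}, {0, 9, 15, 18, 24, 33}, {1, 2, 7, 10, 15, 16},
    {1, 3, 14, 16, 18, 23}, {1, 9, 10, 14, 18, 23}, {1, 9, 10, 14, 19, 24},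
    {1, 9, 11, 14, 16, 24}, {1, 9, 14, 16, 18, 31}, {1, 10, 14, 16, 25, 29},
    {1, 10, 14, 19, 23, 32}, {1, 10, 14, 19, 24, 29}, {1, 10, 14, 23, 25, 38},
    {1, 10, 14, 25, 29, 38}, {1, 14, 16, 21, 23, 36}, {1, 14, 16, 23, 25, 38},
    {1, 14, 16, 29, 31, 44}]

/-! The cycles are exhibited explicitly. For the inequivalence, a board symmetry is an
isometry of the Euclidean square norm on `ℤ × ℤ`, since both generators are; hence the
quartic energy `∑ₓ ∑ᵧ ‖x - y‖⁴` of a finite set of cells is a symmetry invariant, and it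
takes 25 distinct values on the combinations of Appendix B. -/

instance : DecidableRel KnightMove := fun _ _ =>
  inferInstanceAs (Decidable (_ ∨ _))

instance (n : ℕ) [NeZero n] (p : ZMod n → ℤ × ℤ) : Decidable (IsClosedKnightPath n p) :=
  inferInstanceAs (Decidable (_ ∧ _))

def cellFinset (S : Finset ℕ) : Finset (ℤ × ℤ) := S.image cellOfLabel

lemma coe_cellFinset (S : Finset ℕ) : (cellFinset S : Set (ℤ × ℤ)) = cellsOf S :=
  Finset.coe_image

def appendixBCycle : Fin 25 → ZMod 6 → ℤ × ℤ :=
  ![![(0,0), (2,1), (0,2), (1,0), (3,1), (1,2)],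
    ![(0,0), (2,1), (4,0), (3,2), (2,0), (1,2)],
    ![(0,0), (2,1), (3,3), (4,1), (2,0), (1,2)],
    ![(0,0), (2,1), (1,3), (3,2), (2,0), (1,2)],
    ![(0,0), (2,1), (4,0), (5,2), (3,1), (1,2)],
    ![(0,0), (2,1), (4,0), (3,2), (2,4), (1,2)],
    ![(0,0), (2,1), (4,0), (5,2), (3,3), (1,2)],
    ![(0,0), (2,1), (4,2), (5,0), (3,1), (1,2)],
    ![(0,0), (2,1), (4,2), (2,3), (3,1), (1,2)],
    ![(0,0), (2,1), (3,3), (5,2), (3,1), (1,2)],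
    ![(0,0), (2,1), (4,2), (5,4), (3,3), (1,2)],
    ![(1,0), (3,1), (1,2), (2,0), (0,1), (2,2)],
    ![(1,0), (0,2), (2,3), (4,2), (3,0), (2,2)],
    ![(1,0), (3,1), (2,3), (4,2), (2,1), (0,2)],
    ![(1,0), (3,1), (5,2), (3,3), (2,1), (0,2)],
    ![(1,0), (0,2), (2,1), (3,3), (4,1), (2,2)],
    ![(1,0), (0,2), (2,1), (4,2), (3,4), (2,2)],
    ![(1,0), (3,1), (4,3), (2,2), (1,4), (0,2)],
    ![(1,0), (3,1), (5,2), (4,4), (2,3), (0,2)],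
    ![(1,0), (3,1), (5,2), (3,3), (1,4), (0,2)],
    ![(1,0), (3,1), (4,3), (3,5), (2,3), (0,2)],
    ![(1,0), (3,1), (4,3), (3,5), (1,4), (0,2)],
    ![(1,0), (0,2), (2,3), (1,5), (0,3), (2,2)],
    ![(1,0), (0,2), (2,3), (3,5), (4,3), (2,2)],
    ![(1,0), (0,2), (1,4), (2,6), (3,4), (2,2)]]

lemma appendixBCycle_spec (k : Fin 25) :
    IsClosedKnightPath 6 (appendixBCycle k) ∧
      Finset.univ.image (appendixBCycle k) = cellFinset (appendixB k) := by
  revert k; decide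

lemma exists_closedKnightPath_appendixB (k : Fin 25) :
    ∃ p : ZMod 6 → ℤ × ℤ, IsClosedKnightPath 6 p ∧ Set.range p = cellsOf (appendixB k) := by
  obtain ⟨hpath, hcells⟩ := appendixBCycle_spec k
  refine ⟨appendixBCycle k, hpath, ?_⟩
  rw [← coe_cellFinset, ← hcells, Finset.coe_image, Finset.coe_univ, Set.image_univ]

def sqNorm (x : ℤ × ℤ) : ℤ := x.1 ^ 2 + x.2 ^ 2

lemma rot90_apply (x : ℤ × ℤ) : rot90 x = (-x.2, x.1) := rfl

lemma reflDiag_apply (x : ℤ × ℤ) : reflDiag x = (x.2, x.1) := rfl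

def sqNormPreserving : Subgroup ((ℤ × ℤ) ≃ₗ[ℤ] ℤ × ℤ) where
  carrier := {A | ∀ x, sqNorm (A x) = sqNorm x}
  mul_mem' {A B} hA hB x := (hA (B x)).trans (hB x)
  one_mem' _ := rfl
  inv_mem' {A} hA x := by
    rw [← hA (A⁻¹ x)]
    exact congrArg sqNorm (A.apply_symm_apply x)

lemma closure_rot90_reflDiag_le_sqNormPreserving :
    Subgroup.closure ({rot90, reflDiag} : Set ((ℤ × ℤ) ≃ₗ[ℤ] ℤ × ℤ)) ≤ sqNormPreserving := by
  rw [Subgroup.closure_le]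
  rintro A (rfl | rfl) x <;> simp only [rot90_apply, reflDiag_apply, sqNorm] <;> ring

namespace IsBoardSymmetry

variable {g : ℤ × ℤ → ℤ × ℤ}

lemma injective (hg : IsBoardSymmetry g) : Function.Injective g := by
  obtain ⟨A, -, t, rfl⟩ := hg
  exact (add_left_injective t).comp A.injective

lemma sqNorm_sub (hg : IsBoardSymmetry g) (x y : ℤ × ℤ) :
    sqNorm (g x - g y) = sqNorm (x - y) := by
  obtain ⟨A, hA, t, rfl⟩ := hg
  rw [add_sub_add_right_eq_sub, ← map_sub]
  exact closure_rot90_reflDiag_le_sqNormPreserving hA (x - y)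

end IsBoardSymmetry

def quarticEnergy (S : Finset (ℤ × ℤ)) : ℤ := ∑ x ∈ S, ∑ y ∈ S, sqNorm (x - y) ^ 2

lemma quarticEnergy_image {g : ℤ × ℤ → ℤ × ℤ} {S : Finset (ℤ × ℤ)} (hinj : Set.InjOn g S)
    (hg : ∀ x y, sqNorm (g x - g y) = sqNorm (x - y)) :
    quarticEnergy (S.image g) = quarticEnergy S := by
  simp only [quarticEnergy, Finset.sum_image hinj, hg]

/- The quadratic energy `∑ₓ ∑ᵧ ‖x - y‖²` would not do: it takes only 16 values here. -/
lemma quarticEnergy_cellFinset_appendixB_injective :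
    Function.Injective fun k => quarticEnergy (cellFinset (appendixB k)) := by
  decide

/-- Each of the 25 combinations of Appendix B is the vertex set of a closed knight
path of length 6, and no two of them are equivalent under board symmetries. -/
theorem appendixB_classification :
    (∀ k : Fin 25, ∃ p : ZMod 6 → ℤ × ℤ, IsClosedKnightPath 6 p ∧
      Set.range p = cellsOf (appendixB k)) ∧
    (∀ k l : Fin 25, k ≠ l →
      ¬ ∃ g : ℤ × ℤ → ℤ × ℤ, IsBoardSymmetry g ∧
        g '' cellsOf (appendixB k) = cellsOf (appendixB l)) := by
  refine ⟨exists_closedKnightPath_appendixB, ?_⟩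
  rintro k l hkl ⟨g, hg, hcells⟩
  have himage : (cellFinset (appendixB k)).image g = cellFinset (appendixB l) := by
    apply Finset.coe_injective
    rw [Finset.coe_image, coe_cellFinset, coe_cellFinset, hcells]
  apply hkl
  apply quarticEnergy_cellFinset_appendixB_injective
  simp only [← himage, quarticEnergy_image hg.injective.injOn hg.sqNorm_sub]
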